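/- Let $\Omega$ have finite measure, $1 < p < \infty$, and suppose $w_k \rightharpoonup w$ weakly in $L^p(\Omega; \mathbb{R}^n)$ and $g_k \to g$ almost everywhere with $0 \le g_k \le 1$. Then $\liminf_{k\to\infty} \int_\Omega g_k \frac{|w_k|^p}{p} \ge \int_\Omega g \frac{|w|^p}{p}$. -/

import Mathlib

open MeasureTheory Filter

variable {Ω : Type*} [MeasurableSpace Ω]

/-- `u k ⇀ ul` weakly in `L^p(Ω; ℝⁿ)`. -/
def WeakLpTendsto {n : ℕ} (μ : Measure Ω) (p : ℝ)
    (u : ℕ → Ω → EuclideanSpace ℝ (Fin n)) (ul : Ω → EuclideanSpace ℝ (Fin n)) : Prop :=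
  ∀ φ : Ω → EuclideanSpace ℝ (Fin n), MemLp φ (ENNReal.ofReal (p / (p - 1))) μ →
    Tendsto (fun k => ∫ x, (inner ℝ (u k x) (φ x) : ℝ) ∂μ) atTop
      (nhds (∫ x, (inner ℝ (ul x) (φ x) : ℝ) ∂μ))

/-!
The gradient of `‖·‖ ^ p / p` at `w` is `m = ‖w‖ ^ (p - 2) • w`, so convexity gives pointwise
`g_k ‖w_k‖ ^ p / p ≥ g_k ‖w‖ ^ p / p + g_k ⟪w_k - w, m⟫`. After integration, the first term on the
right tends to `∫ g ‖w‖ ^ p / p` by dominated convergence, and the second tends to `0` because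
`w_k - w ⇀ 0` weakly in `Lᵖ` while `g_k • m → g • m` strongly in `Lᵠ` (dominated convergence
again). Pairing a weak with a strong limit needs the weakly convergent sequence to be bounded,
which is the uniform boundedness principle on `Lᵠ` together with the duality
`‖f‖_p = sup_{‖φ‖_q ≤ 1} ∫ ⟪f, φ⟫`; the same bound keeps the energies bounded, so that their
`liminf` is the genuine one.
-/

open Topology
open scoped ENNReal InnerProductSpace

section

variable {E : Type*} [NormedAddCommGroup E] [InnerProductSpace ℝ E]

theorem norm_rpow_sub_two_smul_self {p : ℝ} (hp : p ≠ 1) (b : E) :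
    ‖‖b‖ ^ (p - 2) • b‖ = ‖b‖ ^ (p - 1) := by
  rcases eq_or_ne b 0 with rfl | hb
  · simp [Real.zero_rpow (sub_ne_zero.mpr hp)]
  · rw [norm_smul, Real.norm_of_nonneg (by positivity),
      ← Real.rpow_add_one (norm_ne_zero_iff.mpr hb)]
    ring_nf

theorem inner_rpow_sub_two_smul_self {p : ℝ} (hp : p ≠ 0) (b : E) :
    ⟪b, ‖b‖ ^ (p - 2) • b⟫_ℝ = ‖b‖ ^ p := by
  rcases eq_or_ne b 0 with rfl | hb
  · simp [Real.zero_rpow hp]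
  · have hb' : ‖b‖ ≠ 0 := norm_ne_zero_iff.mpr hb
    rw [real_inner_smul_right, real_inner_self_eq_norm_mul_norm, ← mul_assoc,
      ← Real.rpow_add_one hb', ← Real.rpow_add_one hb']
    ring_nf

/-- The gradient inequality for the convex function `‖·‖ ^ p / p`. -/
theorem rpow_div_add_inner_sub_le {p q : ℝ} (hpq : p.HolderConjugate q) (a b : E) :
    ‖b‖ ^ p / p + ⟪a - b, ‖b‖ ^ (p - 2) • b⟫_ℝ ≤ ‖a‖ ^ p / p := by
  have hyoung := Real.young_inequality_of_nonneg (norm_nonneg a)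
    (Real.rpow_nonneg (norm_nonneg b) (p - 1)) hpq
  rw [← Real.rpow_mul (norm_nonneg b), hpq.sub_one_mul_conj] at hyoung
  have hcs := real_inner_le_norm a (‖b‖ ^ (p - 2) • b)
  rw [norm_rpow_sub_two_smul_self hpq.lt.ne' b] at hcs
  have hsplit : ‖b‖ ^ p / p + ‖b‖ ^ p / q = ‖b‖ ^ p := by
    rw [div_eq_mul_inv, div_eq_mul_inv, ← mul_add, hpq.inv_add_inv_eq_one, mul_one]
  rw [inner_sub_left, inner_rpow_sub_two_smul_self hpq.pos.ne' b]
  linarith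

end

namespace MeasureTheory

variable {α E F : Type*} [MeasurableSpace α] {μ : Measure α} [NormedAddCommGroup E]
  [InnerProductSpace ℝ E] [NormedAddCommGroup F] {p q : ℝ}

theorem ae_abs_le_of_tendsto {c : ℕ → α → ℝ} {c₀ : α → ℝ} {B : ℝ}
    (hB : ∀ k, ∀ᵐ x ∂μ, |c k x| ≤ B) (hlim : ∀ᵐ x ∂μ, Tendsto (c · x) atTop (𝓝 (c₀ x))) :
    ∀ᵐ x ∂μ, |c₀ x| ≤ B := by
  filter_upwards [ae_all_iff.mpr hB, hlim] with x hx hxlim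
  exact le_of_tendsto' (continuous_abs.tendsto _ |>.comp hxlim) hx

theorem tendsto_integral_mul_of_tendsto_ae {c : ℕ → α → ℝ} {c₀ : α → ℝ} {B : ℝ}
    (hc : ∀ k, AEStronglyMeasurable (c k) μ) (hB : ∀ k, ∀ᵐ x ∂μ, |c k x| ≤ B)
    (hlim : ∀ᵐ x ∂μ, Tendsto (c · x) atTop (𝓝 (c₀ x))) {f : α → ℝ} (hf : Integrable f μ) :
    Tendsto (fun k => ∫ x, c k x * f x ∂μ) atTop (𝓝 (∫ x, c₀ x * f x ∂μ)) := by
  refine tendsto_integral_of_dominated_convergence (fun x => B * ‖f x‖)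
    (fun k => (hc k).mul hf.1) (hf.norm.const_mul B) (fun k => ?_) ?_
  · filter_upwards [hB k] with x hx
    rw [norm_mul, Real.norm_eq_abs]
    exact mul_le_mul_of_nonneg_right hx (norm_nonneg _)
  · filter_upwards [hlim] with x hx
    exact hx.mul_const _

theorem tendsto_eLpNorm_smul_sub_smul [NormedSpace ℝ F]
    {r : ℝ≥0∞} (hr : r ≠ ∞) {ψ : α → F} (hψ : MemLp ψ r μ) {c : ℕ → α → ℝ} {c₀ : α → ℝ}
    {B : ℝ} (hc : ∀ k, AEStronglyMeasurable (c k) μ) (hB : ∀ k, ∀ᵐ x ∂μ, |c k x| ≤ B)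
    (hlim : ∀ᵐ x ∂μ, Tendsto (c · x) atTop (𝓝 (c₀ x))) :
    Tendsto (fun k => eLpNorm (fun x => c k x • ψ x - c₀ x • ψ x) r μ) atTop (𝓝 0) := by
  rcases eq_or_ne r 0 with rfl | hr0
  · simp
  have hr' : 0 < r.toReal := ENNReal.toReal_pos hr0 hr
  have hc₀ : AEStronglyMeasurable c₀ μ := aestronglyMeasurable_of_tendsto_ae atTop hc hlim
  have hbound k : (fun x => ‖c k x • ψ x - c₀ x • ψ x‖ₑ ^ r.toReal) ≤ᵐ[μ]
      fun x => ‖(2 * B) • ψ x‖ₑ ^ r.toReal := by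
    filter_upwards [hB k, ae_abs_le_of_tendsto hB hlim] with x hk h₀
    refine ENNReal.rpow_le_rpow (enorm_le_iff_norm_le.mpr ?_) hr'.le
    rw [← sub_smul, norm_smul, norm_smul, Real.norm_eq_abs, Real.norm_eq_abs]
    refine mul_le_mul_of_nonneg_right ?_ (norm_nonneg _)
    calc |c k x - c₀ x| ≤ |c k x| + |c₀ x| := abs_sub _ _
      _ ≤ 2 * B := by linarith
      _ ≤ |2 * B| := le_abs_self _
  have hpointwise : ∀ᵐ x ∂μ,
      Tendsto (fun k => ‖c k x • ψ x - c₀ x • ψ x‖ₑ ^ r.toReal) atTop (𝓝 0) := by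
    filter_upwards [hlim] with x hx
    have h := ((hx.smul_const (ψ x)).sub_const (c₀ x • ψ x)).enorm
    rw [sub_self, enorm_zero] at h
    have h' := (ENNReal.continuous_rpow_const (y := r.toReal)).tendsto 0 |>.comp h
    rwa [ENNReal.zero_rpow_of_pos hr'] at h'
  have hdom : Tendsto (fun k => ∫⁻ x, ‖c k x • ψ x - c₀ x • ψ x‖ₑ ^ r.toReal ∂μ) atTop (𝓝 0) := by
    simpa using tendsto_lintegral_of_dominated_convergence' _
      (fun k => (((hc k).smul hψ.1).sub (hc₀.smul hψ.1)).enorm.pow_const _) hbound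
      (lintegral_rpow_enorm_lt_top_of_eLpNorm_lt_top hr0 hr (hψ.const_smul (2 * B)).2).ne
      hpointwise
  simp_rw [eLpNorm_eq_lintegral_rpow_enorm_toReal hr0 hr]
  have h := (ENNReal.continuous_rpow_const (y := r.toReal⁻¹)).tendsto 0 |>.comp hdom
  rwa [ENNReal.zero_rpow_of_pos (inv_pos.mpr hr'), ← one_div] at h

theorem lpNorm_ofReal_rpow (hp : 0 < p) {f : α → F} (hf : AEStronglyMeasurable f μ) :
    lpNorm f (.ofReal p) μ ^ p = ∫ x, ‖f x‖ ^ p ∂μ := by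
  rw [lpNorm_eq_integral_norm_rpow_toReal (by simpa using hp) ENNReal.ofReal_ne_top hf,
    ENNReal.toReal_ofReal hp.le,
    Real.rpow_inv_rpow (integral_nonneg fun _ => by positivity) hp.ne']

theorem MemLp.integrable_norm_rpow_ofReal (hp : 0 < p) {f : α → F}
    (hf : MemLp f (.ofReal p) μ) : Integrable (fun x => ‖f x‖ ^ p) μ := by
  simpa [ENNReal.toReal_ofReal hp.le] using
    hf.integrable_norm_rpow (by simpa using hp) ENNReal.ofReal_ne_top

theorem MemLp.integrable_mul_norm_rpow_div (hp : 0 < p) {f : α → F}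
    (hf : MemLp f (.ofReal p) μ) {t : α → ℝ} (ht : AEStronglyMeasurable t μ)
    (ht1 : ∀ᵐ x ∂μ, |t x| ≤ 1) : Integrable (fun x => t x * ‖f x‖ ^ p / p) μ :=
  ((hf.integrable_norm_rpow_ofReal hp).bdd_mul ht ht1).div_const p

theorem integral_mul_norm_rpow_div_le (hp : 0 < p) {f : α → F} (hf : MemLp f (.ofReal p) μ)
    {t : α → ℝ} (ht : AEStronglyMeasurable t μ) (ht01 : ∀ᵐ x ∂μ, t x ∈ Set.Icc (0 : ℝ) 1) :
    ∫ x, t x * ‖f x‖ ^ p / p ∂μ ≤ lpNorm f (.ofReal p) μ ^ p / p := by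
  have ht1 : ∀ᵐ x ∂μ, |t x| ≤ 1 := ht01.mono fun x hx => abs_le.mpr ⟨by linarith [hx.1], hx.2⟩
  rw [lpNorm_ofReal_rpow hp hf.1, ← integral_div]
  refine integral_mono_ae (hf.integrable_mul_norm_rpow_div hp ht ht1)
    ((hf.integrable_norm_rpow_ofReal hp).div_const p) ?_
  filter_upwards [ht01] with x hx
  gcongr
  exact mul_le_of_le_one_left (by positivity) hx.2

theorem eLpNorm_rpow_sub_two_smul_self (hpq : p.HolderConjugate q) (f : α → E) :
    eLpNorm (fun x => ‖f x‖ ^ (p - 2) • f x) (.ofReal q) μ =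
      eLpNorm f (.ofReal p) μ ^ (p - 1) := by
  rw [eLpNorm_congr_norm_ae (g := fun x => ‖f x‖ ^ (p - 1)) (.of_forall fun x => by
      rw [norm_rpow_sub_two_smul_self hpq.lt.ne', Real.norm_of_nonneg (by positivity)]),
    eLpNorm_norm_rpow f hpq.sub_one_pos, ← ENNReal.ofReal_mul hpq.symm.nonneg, mul_comm,
    hpq.sub_one_mul_conj]

theorem MemLp.rpow_sub_two_smul_self (hpq : p.HolderConjugate q) {f : α → E}
    (hf : MemLp f (.ofReal p) μ) :
    MemLp (fun x => ‖f x‖ ^ (p - 2) • f x) (.ofReal q) μ :=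
  ⟨(hf.1.norm.aemeasurable.pow_const _).aestronglyMeasurable.smul hf.1, by
    rw [eLpNorm_rpow_sub_two_smul_self hpq]
    exact ENNReal.rpow_lt_top_of_nonneg hpq.sub_one_pos.le hf.eLpNorm_ne_top⟩

theorem MemLp.integrable_inner (hpq : p.HolderConjugate q) {f φ : α → E}
    (hf : MemLp f (.ofReal p) μ) (hφ : MemLp φ (.ofReal q) μ) :
    Integrable (fun x => ⟪f x, φ x⟫_ℝ) μ := by
  have := hpq.ennrealOfReal
  exact memLp_one_iff_integrable.mp ((innerSL ℝ).memLp_of_bilin 1 hf hφ)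

theorem lpNorm_le_of_abs_integral_inner_le (hpq : p.HolderConjugate q) {f : α → E}
    (hf : MemLp f (.ofReal p) μ) {C : ℝ} (hC0 : 0 ≤ C)
    (hC : ∀ φ : α → E, MemLp φ (.ofReal q) μ →
      |∫ x, ⟪f x, φ x⟫_ℝ ∂μ| ≤ C * lpNorm φ (.ofReal q) μ) :
    lpNorm f (.ofReal p) μ ≤ C := by
  set N := lpNorm f (.ofReal p) μ
  have hN0 : 0 ≤ N := lpNorm_nonneg
  have hdual := hC _ (hf.rpow_sub_two_smul_self hpq)
  have hnorm : lpNorm (fun x => ‖f x‖ ^ (p - 2) • f x) (.ofReal q) μ = N ^ (p - 1) := by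
    rw [← toReal_eLpNorm (hf.rpow_sub_two_smul_self hpq).1, eLpNorm_rpow_sub_two_smul_self hpq,
      ← ENNReal.toReal_rpow, toReal_eLpNorm hf.1]
  have hpair : ∫ x, ⟪f x, ‖f x‖ ^ (p - 2) • f x⟫_ℝ ∂μ = N ^ p := by
    simp_rw [inner_rpow_sub_two_smul_self hpq.pos.ne']
    exact (lpNorm_ofReal_rpow hpq.pos hf.1).symm
  rw [hnorm, hpair, abs_of_nonneg (by positivity)] at hdual
  rcases hN0.eq_or_lt with hN | hN
  · rwa [← hN]
  · have hsplit : N ^ p = N ^ (p - 1) * N := by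
      rw [Real.rpow_sub_one hN.ne']
      field_simp
    rw [hsplit, mul_comm C] at hdual
    exact le_of_mul_le_mul_left hdual (by positivity)

theorem exists_abs_integral_inner_le_of_tendsto [CompleteSpace E] (hpq : p.HolderConjugate q)
    {w : ℕ → α → E} (hw : ∀ k, MemLp (w k) (.ofReal p) μ)
    (hconv : ∀ φ : α → E, MemLp φ (.ofReal q) μ →
      ∃ c, Tendsto (fun k => ∫ x, ⟪w k x, φ x⟫_ℝ ∂μ) atTop (𝓝 c)) :
    ∃ C, 0 ≤ C ∧ ∀ k (φ : α → E), MemLp φ (.ofReal q) μ →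
      |∫ x, ⟪w k x, φ x⟫_ℝ ∂μ| ≤ C * lpNorm φ (.ofReal q) μ := by
  have := hpq.ennrealOfReal
  have : Fact (1 ≤ ENNReal.ofReal q) := ⟨ENNReal.one_le_ofReal.mpr hpq.symm.lt.le⟩
  have : Fact (1 ≤ ENNReal.ofReal p) := ⟨ENNReal.one_le_ofReal.mpr hpq.lt.le⟩
  let T k := (innerSL ℝ).lpPairing μ _ (.ofReal q) ((hw k).toLp (w k))
  have hT k (φ : Lp E (.ofReal q) μ) : T k φ = ∫ x, ⟪w k x, φ x⟫_ℝ ∂μ := by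
    refine ((innerSL ℝ).lpPairing_eq_integral _ _).trans (integral_congr_ae ?_)
    filter_upwards [(hw k).coeFn_toLp] with x hx
    rw [hx, innerSL_apply_apply]
  obtain ⟨C, hC⟩ := banach_steinhaus (g := T) fun φ => by
    obtain ⟨c, hc⟩ := hconv φ (Lp.memLp φ)
    obtain ⟨B, hB⟩ := hc.norm.bddAbove_range
    exact ⟨B, fun k => hT k φ ▸ hB ⟨k, rfl⟩⟩
  refine ⟨C, (norm_nonneg _).trans (hC 0), fun k φ hφ => ?_⟩
  have hφT : T k (hφ.toLp φ) = ∫ x, ⟪w k x, φ x⟫_ℝ ∂μ := by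
    refine (hT k _).trans (integral_congr_ae ?_)
    filter_upwards [hφ.coeFn_toLp] with x hx
    rw [hx]
  calc |∫ x, ⟪w k x, φ x⟫_ℝ ∂μ| = ‖T k (hφ.toLp φ)‖ := by rw [hφT, Real.norm_eq_abs]
    _ ≤ ‖T k‖ * ‖hφ.toLp φ‖ := (T k).le_opNorm _
    _ ≤ C * lpNorm φ (.ofReal q) μ := by
      rw [Lp.norm_toLp, toReal_eLpNorm hφ.1]
      exact mul_le_mul_of_nonneg_right (hC k) lpNorm_nonneg

theorem exists_lpNorm_le_of_tendsto [CompleteSpace E] (hpq : p.HolderConjugate q)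
    {w : ℕ → α → E} (hw : ∀ k, MemLp (w k) (.ofReal p) μ)
    (hconv : ∀ φ : α → E, MemLp φ (.ofReal q) μ →
      ∃ c, Tendsto (fun k => ∫ x, ⟪w k x, φ x⟫_ℝ ∂μ) atTop (𝓝 c)) :
    ∃ C, ∀ k, lpNorm (w k) (.ofReal p) μ ≤ C := by
  obtain ⟨C, hC0, hC⟩ := exists_abs_integral_inner_le_of_tendsto hpq hw hconv
  exact ⟨C, fun k => lpNorm_le_of_abs_integral_inner_le hpq (hw k) hC0 (hC k)⟩

theorem tendsto_integral_inner_of_tendsto_eLpNorm [CompleteSpace E] (hpq : p.HolderConjugate q)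
    {v : ℕ → α → E} (hv : ∀ k, MemLp (v k) (.ofReal p) μ)
    (hweak : ∀ φ : α → E, MemLp φ (.ofReal q) μ →
      Tendsto (fun k => ∫ x, ⟪v k x, φ x⟫_ℝ ∂μ) atTop (𝓝 0))
    {ψ : ℕ → α → E} {ψ₀ : α → E} (hψ : ∀ k, MemLp (ψ k) (.ofReal q) μ)
    (hψ₀ : MemLp ψ₀ (.ofReal q) μ)
    (hlim : Tendsto (fun k => eLpNorm (ψ k - ψ₀) (.ofReal q) μ) atTop (𝓝 0)) :
    Tendsto (fun k => ∫ x, ⟪v k x, ψ k x⟫_ℝ ∂μ) atTop (𝓝 0) := by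
  obtain ⟨C, -, hC⟩ := exists_abs_integral_inner_le_of_tendsto hpq hv fun φ hφ => ⟨0, hweak φ hφ⟩
  have hsplit k : ∫ x, ⟪v k x, ψ k x⟫_ℝ ∂μ =
      ∫ x, ⟪v k x, (ψ k - ψ₀) x⟫_ℝ ∂μ + ∫ x, ⟪v k x, ψ₀ x⟫_ℝ ∂μ := by
    rw [← integral_add ((hv k).integrable_inner hpq ((hψ k).sub hψ₀))
      ((hv k).integrable_inner hpq hψ₀)]
    simp [← inner_add_right]
  have hnorm : Tendsto (fun k => C * lpNorm (ψ k - ψ₀) (.ofReal q) μ) atTop (𝓝 0) := by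
    have h := (ENNReal.tendsto_toReal ENNReal.zero_ne_top).comp hlim
    simp_rw [Function.comp_def, toReal_eLpNorm ((hψ _).sub hψ₀).1, ENNReal.toReal_zero] at h
    simpa using h.const_mul C
  have hsmall : Tendsto (fun k => ∫ x, ⟪v k x, (ψ k - ψ₀) x⟫_ℝ ∂μ) atTop (𝓝 0) :=
    squeeze_zero_norm (fun k => (Real.norm_eq_abs _).trans_le (hC k _ ((hψ k).sub hψ₀))) hnorm
  simpa only [hsplit, add_zero] using hsmall.add (hweak ψ₀ hψ₀)

theorem integral_mul_norm_rpow_div_add_integral_inner_le (hpq : p.HolderConjugate q) {a b : α → E}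
    (ha : MemLp a (.ofReal p) μ) (hb : MemLp b (.ofReal p) μ) {t : α → ℝ}
    (ht : AEStronglyMeasurable t μ) (ht01 : ∀ᵐ x ∂μ, t x ∈ Set.Icc (0 : ℝ) 1) :
    ∫ x, t x * ‖b x‖ ^ p / p ∂μ + ∫ x, ⟪a x - b x, t x • (‖b x‖ ^ (p - 2) • b x)⟫_ℝ ∂μ ≤
      ∫ x, t x * ‖a x‖ ^ p / p ∂μ := by
  have ht1 : ∀ᵐ x ∂μ, |t x| ≤ 1 := ht01.mono fun x hx => abs_le.mpr ⟨by linarith [hx.1], hx.2⟩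
  have hinner : Integrable (fun x => ⟪a x - b x, t x • (‖b x‖ ^ (p - 2) • b x)⟫_ℝ) μ :=
    (ha.sub hb).integrable_inner hpq
      ((hb.rpow_sub_two_smul_self hpq).smul (memLp_top_of_bound ht 1 ht1))
  have hb' := hb.integrable_mul_norm_rpow_div hpq.pos ht ht1
  rw [← integral_add hb' hinner]
  refine integral_mono_ae (hb'.add hinner) (ha.integrable_mul_norm_rpow_div hpq.pos ht ht1) ?_
  filter_upwards [ht01] with x hx
  rw [inner_smul_right]
  convert mul_le_mul_of_nonneg_left (rpow_div_add_inner_sub_le hpq (a x) (b x)) hx.1 using 1 <;>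
    ring

theorem le_liminf_integral_mul_norm_rpow_div [CompleteSpace E] (hpq : p.HolderConjugate q)
    {w : ℕ → α → E} {wlim : α → E} (hw : ∀ k, MemLp (w k) (.ofReal p) μ)
    (hwlim : MemLp wlim (.ofReal p) μ)
    (hweak : ∀ φ : α → E, MemLp φ (.ofReal q) μ →
      Tendsto (fun k => ∫ x, ⟪w k x, φ x⟫_ℝ ∂μ) atTop (𝓝 (∫ x, ⟪wlim x, φ x⟫_ℝ ∂μ)))
    {g : ℕ → α → ℝ} {glim : α → ℝ} (hg : ∀ k, AEStronglyMeasurable (g k) μ)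
    (hg01 : ∀ k, ∀ᵐ x ∂μ, g k x ∈ Set.Icc (0 : ℝ) 1)
    (hglim : ∀ᵐ x ∂μ, Tendsto (g · x) atTop (𝓝 (glim x))) :
    ∫ x, glim x * ‖wlim x‖ ^ p / p ∂μ ≤
      liminf (fun k => ∫ x, g k x * ‖w k x‖ ^ p / p ∂μ) atTop := by
  have hp : 0 < p := hpq.pos
  set m : α → E := fun x => ‖wlim x‖ ^ (p - 2) • wlim x
  have hm : MemLp m (.ofReal q) μ := hwlim.rpow_sub_two_smul_self hpq
  have hg1 k : ∀ᵐ x ∂μ, |g k x| ≤ 1 :=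
    (hg01 k).mono fun x hx => abs_le.mpr ⟨by linarith [hx.1], hx.2⟩
  have hglim_meas : AEStronglyMeasurable glim μ := aestronglyMeasurable_of_tendsto_ae atTop hg hglim
  obtain ⟨C, hC⟩ := exists_lpNorm_le_of_tendsto hpq hw fun φ hφ => ⟨_, hweak φ hφ⟩
  have hbdd k : ∫ x, g k x * ‖w k x‖ ^ p / p ∂μ ≤ C ^ p / p :=
    (integral_mul_norm_rpow_div_le hp (hw k) (hg k) (hg01 k)).trans
      (by gcongr; exacts [lpNorm_nonneg, hC k])
  have hfirst : Tendsto (fun k => ∫ x, g k x * ‖wlim x‖ ^ p / p ∂μ) atTop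
      (𝓝 (∫ x, glim x * ‖wlim x‖ ^ p / p ∂μ)) := by
    simp_rw [mul_div_assoc]
    exact tendsto_integral_mul_of_tendsto_ae hg hg1 hglim
      ((hwlim.integrable_norm_rpow_ofReal hp).div_const p)
  have hcross : Tendsto (fun k => ∫ x, ⟪w k x - wlim x, g k x • m x⟫_ℝ ∂μ) atTop (𝓝 0) := by
    refine tendsto_integral_inner_of_tendsto_eLpNorm hpq (fun k => (hw k).sub hwlim)
      (fun φ hφ => ?_) (fun k => hm.smul (memLp_top_of_bound (hg k) 1 (hg1 k)))
      (hm.smul (memLp_top_of_bound hglim_meas 1 (ae_abs_le_of_tendsto hg1 hglim)))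
      (tendsto_eLpNorm_smul_sub_smul ENNReal.ofReal_ne_top hm hg hg1 hglim)
    have h := (hweak φ hφ).sub_const (∫ x, ⟪wlim x, φ x⟫_ℝ ∂μ)
    rw [sub_self] at h
    refine h.congr fun k => ?_
    rw [← integral_sub ((hw k).integrable_inner hpq hφ) (hwlim.integrable_inner hpq hφ)]
    simp [inner_sub_left]
  have hlim := hfirst.add hcross
  rw [add_zero] at hlim
  rw [← hlim.liminf_eq]
  refine liminf_le_liminf (.of_forall fun k => ?_) hlim.isBoundedUnder_ge
    (isCoboundedUnder_ge_of_le atTop hbdd)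
  exact integral_mul_norm_rpow_div_add_integral_inner_le hpq (hw k) hwlim (hg k) (hg01 k)

end MeasureTheory

theorem stmt9_general (n : ℕ) (p : ℝ) (hp1 : 1 < p)
    (μ : Measure Ω)
    (w : ℕ → Ω → EuclideanSpace ℝ (Fin n)) (wlim : Ω → EuclideanSpace ℝ (Fin n))
    (hwk : ∀ k, MemLp (w k) (ENNReal.ofReal p) μ) (hwl : MemLp wlim (ENNReal.ofReal p) μ)
    (hweak : WeakLpTendsto μ p w wlim)
    (g : ℕ → Ω → ℝ) (glim : Ω → ℝ) (hgm : ∀ k, Measurable (g k))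
    (hg01 : ∀ k x, g k x ∈ Set.Icc (0:ℝ) 1)
    (hgae : ∀ᵐ x ∂μ, Tendsto (fun k => g k x) atTop (nhds (glim x))) :
    (∫ x, glim x * ‖wlim x‖ ^ p / p ∂μ) ≤
      Filter.liminf (fun k => ∫ x, g k x * ‖w k x‖ ^ p / p ∂μ) atTop := by
  have hpq : p.HolderConjugate (p / (p - 1)) :=
    (Real.holderConjugate_iff_eq_conjExponent hp1).mpr rfl
  exact le_liminf_integral_mul_norm_rpow_div hpq hwk hwl hweak
    (fun k => (hgm k).aestronglyMeasurable) (fun k => .of_forall (hg01 k)) hgae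

/-- Weak lower semicontinuity of the weighted Norton–Hoff energy: if `w_k ⇀ w`
weakly in `L^p` and `g_k → g` a.e. with `0 ≤ g_k ≤ 1`, then
`liminf ∫ g_k |w_k|^p / p ≥ ∫ g |w|^p / p`. -/
theorem stmt9 (n : ℕ) (p : ℝ) (hp1 : 1 < p)
    (μ : Measure Ω) [IsFiniteMeasure μ]
    (w : ℕ → Ω → EuclideanSpace ℝ (Fin n)) (wlim : Ω → EuclideanSpace ℝ (Fin n))
    (hwk : ∀ k, MemLp (w k) (ENNReal.ofReal p) μ) (hwl : MemLp wlim (ENNReal.ofReal p) μ)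
    (hweak : WeakLpTendsto μ p w wlim)
    (g : ℕ → Ω → ℝ) (glim : Ω → ℝ) (hgm : ∀ k, Measurable (g k))
    (hg01 : ∀ k x, g k x ∈ Set.Icc (0:ℝ) 1)
    (hgae : ∀ᵐ x ∂μ, Tendsto (fun k => g k x) atTop (nhds (glim x))) :
    (∫ x, glim x * ‖wlim x‖ ^ p / p ∂μ) ≤
      Filter.liminf (fun k => ∫ x, g k x * ‖w k x‖ ^ p / p ∂μ) atTop :=
  stmt9_general n p hp1 μ w wlim hwk hwl hweak g glim hgm hg01 hgae
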